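/- Let S and A be finite nonempty sets, γ ∈ (0,1), h : S → ℝ, T : S × A → S, and T̂ : S × A → Finset S with T(s,a) ∈ T̂(s,a) for all (s,a). Let Q* be the unique fixed point of B(Q)(s,a) = (1-γ)h(s) + γ·max(h(s), min_{a'} Q(T(s,a), a')) and let Q̄* be the unique fixed point of B̄(Q)(s,a) = (1-γ)h(s) + γ·max(h(s), max_{s' ∈ T̂(s,a)} min_{a'} Q(s', a')). Then Q̄*(s,a) ≥ Q*(s,a) for all (s,a). -/

import Mathlib

/-!
Both Bellman operators satisfy the one-sided contraction estimate
`Q ≤ Q' + c → B Q ≤ B Q' + γ c` for constants `c ≥ 0`, and since the true successor `T p`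
is among the candidates in `T̂ p`, the pessimistic operator `B` lies below the optimistic one
`B̄`. Hence `Q̄* = B̄ Q̄* ≥ B Q̄*`, and from `Q* ≤ Q̄* + c` the estimate gives
`Q* = B Q* ≤ B Q̄* + γ c ≤ Q̄* + γ c`; iterating, `Q* ≤ Q̄* + γⁿ c → Q̄*`.
-/

open Finset

theorem le_of_isFixedPt_of_map_le {X : Type*} [Finite X] {γ : ℝ} (hγ₀ : 0 ≤ γ)
    (hγ₁ : γ < 1) {B : (X → ℝ) → X → ℝ}
    (hB : ∀ Q Q' c, 0 ≤ c → (∀ x, Q x ≤ Q' x + c) → ∀ x, B Q x ≤ B Q' x + γ * c)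
    {Q₁ Q₂ : X → ℝ} (h₁ : Function.IsFixedPt B Q₁) (h₂ : B Q₂ ≤ Q₂) : Q₁ ≤ Q₂ := by
  obtain ⟨c, hc⟩ := Finite.exists_le fun x => Q₁ x - Q₂ x
  have hc₀ : 0 ≤ max c 0 := le_max_right c 0
  have le_add_pow_mul : ∀ n : ℕ, ∀ x, Q₁ x ≤ Q₂ x + γ ^ n * max c 0 := by
    intro n
    induction n with
    | zero => intro x; linarith [hc x, le_max_left c 0]
    | succ n ih =>
      intro x
      calc Q₁ x = B Q₁ x := (congrFun h₁ x).symm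
        _ ≤ B Q₂ x + γ * (γ ^ n * max c 0) := hB _ _ _ (by positivity) ih x
        _ ≤ Q₂ x + γ ^ (n + 1) * max c 0 := by rw [pow_succ']; linarith [h₂ x]
  intro x
  have hlim : Filter.Tendsto (fun n : ℕ => Q₂ x + γ ^ n * max c 0) Filter.atTop
      (nhds (Q₂ x + 0 * max c 0)) :=
    tendsto_const_nhds.add ((tendsto_pow_atTop_nhds_zero_of_lt_one hγ₀ hγ₁).mul_const _)
  rw [zero_mul, add_zero] at hlim
  exact ge_of_tendsto' hlim fun n => le_add_pow_mul n x

theorem Finset.inf'_le_inf'_add {ι : Type*} {s : Finset ι} (hs : s.Nonempty) {f g : ι → ℝ}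
    {c : ℝ} (hfg : ∀ i ∈ s, f i ≤ g i + c) : s.inf' hs f ≤ s.inf' hs g + c := by
  have : s.inf' hs f - c ≤ s.inf' hs g :=
    le_inf' hs g fun i hi => by linarith [inf'_le f hi, hfg i hi]
  linarith

theorem max_le_max_add {a x y c : ℝ} (hc : 0 ≤ c) (hxy : x ≤ y + c) :
    max a x ≤ max a y + c :=
  max_le (by linarith [le_max_left a y]) (by linarith [le_max_right a y])

section Bellman

variable {S A : Type} [Fintype A] [Nonempty A] (γ : ℝ) (h : S → ℝ)

def minOverActions (Q : S × A → ℝ) (s : S) : ℝ :=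
  univ.inf' univ_nonempty fun a => Q (s, a)

def bellman (T : S × A → S) (Q : S × A → ℝ) (p : S × A) : ℝ :=
  (1 - γ) * h p.1 + γ * max (h p.1) (minOverActions Q (T p))

def optimisticBellman (That : S × A → Finset S) (hTne : ∀ p, (That p).Nonempty)
    (Q : S × A → ℝ) (p : S × A) : ℝ :=
  (1 - γ) * h p.1 + γ * max (h p.1) ((That p).sup' (hTne p) (minOverActions Q))

variable {γ}

theorem minOverActions_le_add {Q Q' : S × A → ℝ} {c : ℝ} (hQ : ∀ p, Q p ≤ Q' p + c) (s : S) :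
    minOverActions Q s ≤ minOverActions Q' s + c :=
  inf'_le_inf'_add _ fun a _ => hQ (s, a)

theorem bellman_le_add {T : S × A → S} (hγ : 0 ≤ γ) {Q Q' : S × A → ℝ} {c : ℝ} (hc : 0 ≤ c)
    (hQ : ∀ p, Q p ≤ Q' p + c) (p : S × A) :
    bellman γ h T Q p ≤ bellman γ h T Q' p + γ * c := by
  have := mul_le_mul_of_nonneg_left
    (max_le_max_add (a := h p.1) hc (minOverActions_le_add hQ (T p))) hγ
  simp only [bellman]
  linarith

theorem bellman_le_optimisticBellman {T : S × A → S} {That : S × A → Finset S}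
    (hT : ∀ p, T p ∈ That p) (hTne : ∀ p, (That p).Nonempty) (hγ : 0 ≤ γ) (Q : S × A → ℝ) :
    bellman γ h T Q ≤ optimisticBellman γ h That hTne Q := fun p => by
  unfold bellman optimisticBellman
  gcongr
  exact le_sup' (minOverActions Q) (hT p)

end Bellman

theorem stmt_4_general {S A : Type} [Fintype S] [Fintype A] [Nonempty A]
    (γ : ℝ) (hγ : γ ∈ Set.Ioo (0 : ℝ) 1) (h : S → ℝ)
    (T : S × A → S) (That : S × A → Finset S) (hT : ∀ p, T p ∈ That p)
    (hTne : ∀ p, (That p).Nonempty)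
    (Qstar Qbar : S × A → ℝ)
    (hQstar : ∀ p, Qstar p = (1 - γ) * h p.1 + γ * max (h p.1)
      (Finset.univ.inf' Finset.univ_nonempty (fun a' : A => Qstar (T p, a'))))
    (hQbar : ∀ p, Qbar p = (1 - γ) * h p.1 + γ * max (h p.1)
      ((That p).sup' (hTne p) (fun s' =>
        Finset.univ.inf' Finset.univ_nonempty (fun a' : A => Qbar (s', a'))))) :
    ∀ p, Qstar p ≤ Qbar p := by
  have hγ₀ : 0 ≤ γ := hγ.1.le
  have hQstar_fixed : Function.IsFixedPt (bellman γ h T) Qstar :=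
    funext fun p => (hQstar p).symm
  have hQbar_super : bellman γ h T Qbar ≤ Qbar := fun p =>
    (bellman_le_optimisticBellman h hT hTne hγ₀ Qbar p).trans_eq (hQbar p).symm
  exact le_of_isFixedPt_of_map_le hγ₀ hγ.2
    (fun _ _ _ hc hQ => bellman_le_add h hγ₀ hc hQ) hQstar_fixed hQbar_super

theorem stmt_4 {S A : Type} [Fintype S] [Fintype A] [Nonempty S] [Nonempty A]
    (γ : ℝ) (hγ : γ ∈ Set.Ioo (0 : ℝ) 1) (h : S → ℝ)
    (T : S × A → S) (That : S × A → Finset S) (hT : ∀ p, T p ∈ That p)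
    (hTne : ∀ p, (That p).Nonempty)
    (Qstar Qbar : S × A → ℝ)
    (hQstar : ∀ p, Qstar p = (1 - γ) * h p.1 + γ * max (h p.1)
      (Finset.univ.inf' Finset.univ_nonempty (fun a' : A => Qstar (T p, a'))))
    (hQbar : ∀ p, Qbar p = (1 - γ) * h p.1 + γ * max (h p.1)
      ((That p).sup' (hTne p) (fun s' =>
        Finset.univ.inf' Finset.univ_nonempty (fun a' : A => Qbar (s', a'))))) :
    ∀ p, Qstar p ≤ Qbar p :=
  stmt_4_general γ hγ h T That hT hTne Qstar Qbar hQstar hQbar
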